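/- arXiv:2306.15085 — 7 statements merged into one kernel-verified Lean document; each statement's English description precedes it below -/
import Mathlib

section
/- Let f be a polymatroid on a finite set E and let X, Y, U ⊆ E satisfy f(U ∪ X) = f(X) and f(U ∪ Y) = f(Y). Then f(U) ≤ f(X) + f(Y) − f(X ∪ Y). -/
open Finset

/-- A polymatroid on a finite ground set `E`: a real-valued function on the subsets of `E`
with `f ∅ = 0`, monotone and submodular. -/
def IsPolymatroid {α : Type*} [DecidableEq α] (E : Finset α) (f : Finset α → ℝ) : Prop :=
  f ∅ = 0 ∧
  (∀ ⦃X Y : Finset α⦄, X ⊆ Y → Y ⊆ E → f X ≤ f Y) ∧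
  (∀ ⦃X Y : Finset α⦄, X ⊆ E → Y ⊆ E → f (X ∪ Y) + f (X ∩ Y) ≤ f X + f Y)

/-- Submodularity applied to `U ∪ X` and `U ∪ Y`, whose union is `U ∪ (X ∪ Y) ⊇ X ∪ Y` and
whose intersection is `U ∪ (X ∩ Y) ⊇ U`. -/
theorem IsPolymatroid.add_le_union_add_union {α : Type*} [DecidableEq α] {E : Finset α}
    {f : Finset α → ℝ} (hf : IsPolymatroid E f) {X Y U : Finset α}
    (hXE : X ⊆ E) (hYE : Y ⊆ E) (hUE : U ⊆ E) :
    f U + f (X ∪ Y) ≤ f (U ∪ X) + f (U ∪ Y) := by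
  obtain ⟨-, hmono, hsub⟩ := hf
  have hsubUXY := hsub (union_subset hUE hXE) (union_subset hUE hYE)
  rw [← union_union_distrib_left, ← union_inter_distrib_left] at hsubUXY
  have hU : f U ≤ f (U ∪ X ∩ Y) :=
    hmono subset_union_left (union_subset hUE (inter_subset_left.trans hXE))
  have hXY : f (X ∪ Y) ≤ f (U ∪ (X ∪ Y)) :=
    hmono subset_union_right (union_subset hUE (union_subset hXE hYE))
  linarith

/-- If `f(U ∪ X) = f(X)` and `f(U ∪ Y) = f(Y)`, then `f(U) ≤ f(X) + f(Y) − f(X ∪ Y)`. -/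
theorem stmt_0 {α : Type*} [DecidableEq α] (E : Finset α) (f : Finset α → ℝ)
    (hf : IsPolymatroid E f) (X Y U : Finset α)
    (hXE : X ⊆ E) (hYE : Y ⊆ E) (hUE : U ⊆ E)
    (hUX : f (U ∪ X) = f X) (hUY : f (U ∪ Y) = f Y) :
    f U ≤ f X + f Y - f (X ∪ Y) := by
  have key := hf.add_le_union_add_union hXE hYE hUE
  rw [hUX, hUY] at key
  linarith
end

section
/- Let f be a polymatroid on a finite set E and let X, Y, U ⊆ E satisfy f(U ∪ X) = f(X) and f(U ∪ Y) = f(Y). If Z ⊆ E is a common information for the pair (X, Y) in f, then f(U ∪ Z) = f(Z). -/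
open Finset

/-! `f (U ∪ W) = f W` says that `W` spans `U`. Spanning passes to supersets of `W`, and is
inherited by `Z` from two spanning sets `W₁ ⊇ Z` and `W₂ ⊇ Z` forming a modular pair with
"intersection" `Z`; a common information `Z` for `(X, Y)` is exactly such a `Z` for
`W₁ = X ∪ Z` and `W₂ = Y ∪ Z`. -/

namespace IsPolymatroid

variable {α : Type*} [DecidableEq α] {E : Finset α} {f : Finset α → ℝ}

theorem mono (hf : IsPolymatroid E f) {X Y : Finset α} (hXY : X ⊆ Y) (hY : Y ⊆ E) :
    f X ≤ f Y :=
  hf.2.1 hXY hY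

theorem add_le_of_subset_inter (hf : IsPolymatroid E f) {A B C D : Finset α}
    (hA : A ⊆ E) (hB : B ⊆ E) (hC : C ⊆ A ∩ B) (hD : D ⊆ A ∪ B) :
    f D + f C ≤ f A + f B := by
  have hsub := hf.2.2 hA hB
  have hCle := hf.mono hC (inter_subset_left.trans hA)
  have hDle := hf.mono hD (union_subset hA hB)
  linarith

theorem union_eq_of_subset (hf : IsPolymatroid E f) {U X W : Finset α}
    (hUE : U ⊆ E) (hXW : X ⊆ W) (hWE : W ⊆ E) (hUX : f (U ∪ X) = f X) :
    f (U ∪ W) = f W := by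
  have hle : f (U ∪ W) + f X ≤ f (U ∪ X) + f W :=
    hf.add_le_of_subset_inter (union_subset hUE (hXW.trans hWE)) hWE
      (subset_inter subset_union_right hXW)
      (union_subset (union_subset_left subset_union_left) subset_union_right)
  have hge := hf.mono (subset_union_right (s₁ := U)) (union_subset hUE hWE)
  linarith

theorem union_eq_of_modular (hf : IsPolymatroid E f) {U Z W₁ W₂ : Finset α}
    (hUE : U ⊆ E) (hW₁E : W₁ ⊆ E) (hW₂E : W₂ ⊆ E) (hZW₁ : Z ⊆ W₁) (hZW₂ : Z ⊆ W₂)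
    (hmod : f W₁ + f W₂ = f (W₁ ∪ W₂) + f Z)
    (h₁ : f (U ∪ W₁) = f W₁) (h₂ : f (U ∪ W₂) = f W₂) :
    f (U ∪ Z) = f Z := by
  have hle : f (W₁ ∪ W₂) + f (U ∪ Z) ≤ f (U ∪ W₁) + f (U ∪ W₂) :=
    hf.add_le_of_subset_inter (union_subset hUE hW₁E) (union_subset hUE hW₂E)
      (union_subset (subset_inter subset_union_left subset_union_left)
        (subset_inter (hZW₁.trans subset_union_right) (hZW₂.trans subset_union_right)))
      (union_subset_union subset_union_right subset_union_right)
  have hge := hf.mono (subset_union_right (s₁ := U)) (union_subset hUE (hZW₁.trans hW₁E))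
  linarith

end IsPolymatroid

theorem stmt_1_general {α : Type*} [DecidableEq α] (E : Finset α) (f : Finset α → ℝ)
    (hf : IsPolymatroid E f) (X Y U Z : Finset α)
    (hXE : X ⊆ E) (hYE : Y ⊆ E) (hUE : U ⊆ E) (hZE : Z ⊆ E)
    (hUX : f (U ∪ X) = f X) (hUY : f (U ∪ Y) = f Y)
    (hZmod : f (X ∪ Z) + f (Y ∪ Z) = f (X ∪ Y ∪ Z) + f Z) :
    f (U ∪ Z) = f Z := by
  have hunion : X ∪ Z ∪ (Y ∪ Z) = X ∪ Y ∪ Z := by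
    rw [union_union_union_comm, union_self]
  refine hf.union_eq_of_modular hUE (union_subset hXE hZE) (union_subset hYE hZE)
    subset_union_right subset_union_right (hunion ▸ hZmod) ?_ ?_
  · exact hf.union_eq_of_subset hUE subset_union_left (union_subset hXE hZE) hUX
  · exact hf.union_eq_of_subset hUE subset_union_left (union_subset hYE hZE) hUY

/-- If `f(U ∪ X) = f(X)`, `f(U ∪ Y) = f(Y)` and `Z` is a common information for `(X, Y)`
in `f`, then `f(U ∪ Z) = f(Z)`. -/
theorem stmt_1 {α : Type*} [DecidableEq α] (E : Finset α) (f : Finset α → ℝ)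
    (hf : IsPolymatroid E f) (X Y U Z : Finset α)
    (hXE : X ⊆ E) (hYE : Y ⊆ E) (hUE : U ⊆ E) (hZE : Z ⊆ E)
    (hUX : f (U ∪ X) = f X) (hUY : f (U ∪ Y) = f Y)
    (hZX : f (Z ∪ X) = f X) (hZY : f (Z ∪ Y) = f Y)
    (hZmod : f (X ∪ Z) + f (Y ∪ Z) = f (X ∪ Y ∪ Z) + f Z) :
    f (U ∪ Z) = f Z :=
  stmt_1_general E f hf X Y U Z hXE hYE hUE hZE hUX hUY hZmod
end

section
/- Let f be a polymatroid on a finite set E and let L₀, L₁, L₂ ⊆ E satisfy f(Lᵢ) = 2 for each i, f(Lᵢ ∪ Lⱼ) = 3 whenever i ≠ j, and f(L₀ ∪ L₁ ∪ L₂) = 4. Let z ∉ E and let g be a polymatroid on E ∪ {z} extending f that is an AK extension of f (with Z = {z}) for the pair (L₁ ∪ L₂, L₀). Then g({z} ∪ Lᵢ) = g(Lᵢ) for each i = 0, 1, 2. -/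
/-! Write `Lᵢⱼ` for `Lᵢ ∪ Lⱼ`. Since `z` is absorbed by `L₁₂`, the AK identity for `X' = L₁₂` gives
`g(z) = g(L₀) + g(L₁₂) - g(L₀₁₂)`, and then the identity for `X' = L₁` gives
`g(L₁ ∪ z) = g(L₀₁) + g(L₁₂) - g(L₀₁₂) = 2 = g(L₁)`; likewise for `L₂`. By submodularity an
element absorbed by a set is absorbed by every superset, so `g(L₀ᵢ ∪ z) = 3` for `i = 1, 2`, and
submodularity for these two sets yields `g(L₀ ∪ z) ≤ 3 + 3 - g(L₀₁₂) = 2 = g(L₀)`. -/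

open Finset

/-- Ahlswede–Körner extension condition for the pair `(X, Y)`. -/
def IsAKExtension {α : Type*} [DecidableEq α] (Z : Finset α) (g : Finset α → ℝ)
    (X Y : Finset α) : Prop :=
  g (Z ∪ X) = g X ∧ ∀ X' ⊆ X, g (X' ∪ Z) - g Z = g (X' ∪ Y) - g Y

namespace IsPolymatroid

variable {α : Type*} [DecidableEq α] {E : Finset α} {g : Finset α → ℝ}

theorem add_le_add_of_subset (hg : IsPolymatroid E g) {A B C D : Finset α} (hA : A ⊆ E)
    (hB : B ⊆ E) (hD : D ⊆ A ∪ B) (hC : C ⊆ A ∩ B) : g D + g C ≤ g A + g B :=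
  (add_le_add (hg.2.1 hD (union_subset hA hB)) (hg.2.1 hC (inter_subset_left.trans hA))).trans
    (hg.2.2 hA hB)

theorem apply_union_eq_of_subset (hg : IsPolymatroid E g) {A B Z : Finset α} (hAB : A ⊆ B)
    (hBZ : B ∪ Z ⊆ E) (hA : g (A ∪ Z) = g A) : g (B ∪ Z) = g B := by
  have hsub : g (B ∪ Z) + g A ≤ g B + g (A ∪ Z) :=
    hg.add_le_add_of_subset (subset_union_left.trans hBZ)
      (union_subset (hAB.trans subset_union_left) subset_union_right |>.trans hBZ)
      (union_subset_union_right subset_union_right)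
      (subset_inter hAB subset_union_left)
  exact le_antisymm (by linarith) (hg.2.1 subset_union_left hBZ)

end IsPolymatroid

theorem IsAKExtension.apply_union_eq {α : Type*} [DecidableEq α] {Z : Finset α}
    {g : Finset α → ℝ} {X Y X' : Finset α} (h : IsAKExtension Z g X Y) (hX' : X' ⊆ X) :
    g (X' ∪ Z) = g (Y ∪ X') + g X - g (Y ∪ X) := by
  have hX := h.2 X Subset.rfl
  rw [union_comm, h.1, union_comm X] at hX
  linarith [union_comm X' Y ▸ h.2 X' hX']

theorem stmt_4_general {α : Type*} [DecidableEq α] (E : Finset α) (f : Finset α → ℝ)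
    (L₀ L₁ L₂ : Finset α) (hL₀ : L₀ ⊆ E) (hL₁ : L₁ ⊆ E) (hL₂ : L₂ ⊆ E)
    (hr0 : f L₀ = 2) (hr1 : f L₁ = 2) (hr2 : f L₂ = 2)
    (hr01 : f (L₀ ∪ L₁) = 3) (hr02 : f (L₀ ∪ L₂) = 3) (hr12 : f (L₁ ∪ L₂) = 3)
    (hr012 : f (L₀ ∪ L₁ ∪ L₂) = 4)
    (z : α)
    (g : Finset α → ℝ) (hg : IsPolymatroid (E ∪ {z}) g)
    (hext : ∀ X ⊆ E, g X = f X)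
    (hAK : IsAKExtension {z} g (L₁ ∪ L₂) L₀) :
    g ({z} ∪ L₀) = g L₀ ∧ g ({z} ∪ L₁) = g L₁ ∧ g ({z} ∪ L₂) = g L₂ := by
  have hE : ∀ {X}, X ⊆ E → X ∪ {z} ⊆ E ∪ {z} := union_subset_union_left
  obtain ⟨g0, g1, g2, g01, g02, g12, g012⟩ : g L₀ = 2 ∧ g L₁ = 2 ∧ g L₂ = 2 ∧
      g (L₀ ∪ L₁) = 3 ∧ g (L₀ ∪ L₂) = 3 ∧ g (L₁ ∪ L₂) = 3 ∧ g (L₀ ∪ L₁ ∪ L₂) = 4 := by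
    refine ⟨?_, ?_, ?_, ?_, ?_, ?_, ?_⟩ <;> rw [hext _ (by grind)] <;> assumption
  have hL₁z : g (L₁ ∪ {z}) = g L₁ := by
    rw [hAK.apply_union_eq subset_union_left, ← union_assoc]
    linarith
  have hL₂z : g (L₂ ∪ {z}) = g L₂ := by
    rw [hAK.apply_union_eq subset_union_right, ← union_assoc]
    linarith
  have hL₀₁z := hg.apply_union_eq_of_subset subset_union_right (hE (union_subset hL₀ hL₁)) hL₁z
  have hL₀₂z := hg.apply_union_eq_of_subset subset_union_right (hE (union_subset hL₀ hL₂)) hL₂z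
  have hsubmod : g (L₀ ∪ L₁ ∪ L₂) + g (L₀ ∪ {z}) ≤ g (L₀ ∪ L₁ ∪ {z}) + g (L₀ ∪ L₂ ∪ {z}) :=
    hg.add_le_add_of_subset (hE (union_subset hL₀ hL₁)) (hE (union_subset hL₀ hL₂))
      (by grind) (by grind)
  rw [union_comm {z} L₀, union_comm {z} L₁, union_comm {z} L₂]
  exact ⟨le_antisymm (by linarith) (hg.2.1 subset_union_left (hE hL₀)), hL₁z, hL₂z⟩

/-- If `f(Lᵢ) = 2`, `f(Lᵢ ∪ Lⱼ) = 3` for `i ≠ j`, `f(L₀ ∪ L₁ ∪ L₂) = 4`, and `g` is a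
single-element AK extension of `f` for the pair `(L₁ ∪ L₂, L₀)`, then
`g({z} ∪ Lᵢ) = g(Lᵢ)` for `i = 0, 1, 2`. -/
theorem stmt_4 {α : Type*} [DecidableEq α] (E : Finset α) (f : Finset α → ℝ)
    (hf : IsPolymatroid E f)
    (L₀ L₁ L₂ : Finset α) (hL₀ : L₀ ⊆ E) (hL₁ : L₁ ⊆ E) (hL₂ : L₂ ⊆ E)
    (hr0 : f L₀ = 2) (hr1 : f L₁ = 2) (hr2 : f L₂ = 2)
    (hr01 : f (L₀ ∪ L₁) = 3) (hr02 : f (L₀ ∪ L₂) = 3) (hr12 : f (L₁ ∪ L₂) = 3)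
    (hr012 : f (L₀ ∪ L₁ ∪ L₂) = 4)
    (z : α) (hz : z ∉ E)
    (g : Finset α → ℝ) (hg : IsPolymatroid (E ∪ {z}) g)
    (hext : ∀ X ⊆ E, g X = f X)
    (hAK : IsAKExtension {z} g (L₁ ∪ L₂) L₀) :
    g ({z} ∪ L₀) = g L₀ ∧ g ({z} ∪ L₁) = g L₁ ∧ g ({z} ∪ L₂) = g L₂ :=
  stmt_4_general E f L₀ L₁ L₂ hL₀ hL₁ hL₂ hr0 hr1 hr2 hr01 hr02 hr12 hr012 z g hg hext hAK
end

section
/- Let f be a polymatroid on a finite set E, let U ⊆ E and X, Y ⊆ E ∖ U, let Z be a finite set disjoint from E, and let g be a polymatroid on E ∪ Z extending f that is a CI extension of f for the pair (X ∪ U, Y ∪ U). Define h on subsets of (E ∪ Z) ∖ U by h(S) = g(S ∪ U) − g(U). Then h is a polymatroid on (E ∪ Z) ∖ U extending the contraction of f by U (i.e., h(S) = f(S ∪ U) − f(U) for S ⊆ E ∖ U), and h is a CI extension for the pair (X, Y): h(Z ∪ X) = h(X), h(Z ∪ Y) = h(Y), and h(X ∪ Z) + h(Y ∪ Z) = h(X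 ∪ Y ∪ Z) + h(Z). -/
open Finset

/-- Common information extension condition for the pair `(X, Y)`:
`g(Z ∪ X) = g(X)`, `g(Z ∪ Y) = g(Y)` and `g(X ∪ Z) + g(Y ∪ Z) = g(X ∪ Y ∪ Z) + g(Z)`. -/
def IsCIExtension {α : Type*} [DecidableEq α] (Z : Finset α) (g : Finset α → ℝ)
    (X Y : Finset α) : Prop :=
  g (Z ∪ X) = g X ∧ g (Z ∪ Y) = g Y ∧
    g (X ∪ Z) + g (Y ∪ Z) = g (X ∪ Y ∪ Z) + g Z

section

variable {α : Type*} [DecidableEq α] {E : Finset α} {g : Finset α → ℝ}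

theorem IsPolymatroid.contract (hg : IsPolymatroid E g) {U : Finset α} (hU : U ⊆ E) :
    IsPolymatroid (E \ U) (fun S => g (S ∪ U) - g U) := by
  obtain ⟨-, hmono, hsub⟩ := hg
  have hSU : ∀ ⦃S⦄, S ⊆ E \ U → S ∪ U ⊆ E := fun S hS =>
    union_subset (hS.trans sdiff_subset) hU
  refine ⟨by simp, fun S T hST hT => ?_, fun S T hS hT => ?_⟩
  · exact sub_le_sub_right (hmono (union_subset_union_left hST) (hSU hT)) _
  · have := hsub (hSU hS) (hSU hT)
    rw [← union_union_distrib_right, ← inter_union_distrib_right] at this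
    linarith

/-- Submodularity applied to `Z ∪ X` and `Z ∪ Y` shows that `Z` already carries all the
information of `X ∩ Y`. -/
theorem IsCIExtension.apply_union_eq_of_subset_inter {Z X Y W : Finset α}
    (hCI : IsCIExtension Z g X Y) (hg : IsPolymatroid E g) (hZ : Z ⊆ E) (hX : X ⊆ E)
    (hY : Y ⊆ E) (hW : W ⊆ X ∩ Y) : g (Z ∪ W) = g Z := by
  obtain ⟨-, hmono, hsub⟩ := hg
  obtain ⟨hZX, hZY, hmodular⟩ := hCI
  have hinter : g (Z ∪ (X ∩ Y)) ≤ g Z := by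
    have := hsub (union_subset hZ hX) (union_subset hZ hY)
    rw [← union_inter_distrib_left, hZX, hZY,
      show Z ∪ X ∪ (Z ∪ Y) = X ∪ Y ∪ Z by ext; simp; tauto] at this
    rw [union_comm X, union_comm Y, hZX, hZY] at hmodular
    linarith
  have hXY : Z ∪ (X ∩ Y) ⊆ E := union_subset hZ (inter_subset_left.trans hX)
  refine le_antisymm ?_ (hmono subset_union_left ((union_subset_union_right hW).trans hXY))
  exact (hmono (union_subset_union_right hW) hXY).trans hinter

theorem IsCIExtension.contract {Z X Y U : Finset α}
    (hCI : IsCIExtension Z g (X ∪ U) (Y ∪ U)) (hg : IsPolymatroid E g) (hZ : Z ⊆ E)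
    (hX : X ∪ U ⊆ E) (hY : Y ∪ U ⊆ E) :
    IsCIExtension Z (fun S => g (S ∪ U) - g U) X Y := by
  have hZU : g (Z ∪ U) = g Z :=
    hCI.apply_union_eq_of_subset_inter hg hZ hX hY
      (subset_inter subset_union_right subset_union_right)
  obtain ⟨hZX, hZY, hmodular⟩ := hCI
  refine ⟨?_, ?_, ?_⟩
  · simp only [union_assoc, hZX]
  · simp only [union_assoc, hZY]
  · rw [← union_union_distrib_right] at hmodular
    simp only [union_right_comm _ Z U, hZU]
    linarith

end

theorem stmt_5_general {α : Type*} [DecidableEq α] (E Z U : Finset α)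
    (hUE : U ⊆ E)
    (X Y : Finset α) (hXE : X ⊆ E \ U) (hYE : Y ⊆ E \ U)
    (f g : Finset α → ℝ) (hg : IsPolymatroid (E ∪ Z) g)
    (hext : ∀ S ⊆ E, g S = f S)
    (hCI : IsCIExtension Z g (X ∪ U) (Y ∪ U))
    (h : Finset α → ℝ) (hh : ∀ S, h S = g (S ∪ U) - g U) :
    IsPolymatroid ((E ∪ Z) \ U) h ∧
    (∀ S ⊆ E \ U, h S = f (S ∪ U) - f U) ∧
    IsCIExtension Z h X Y := by
  have hSU : ∀ ⦃S⦄, S ⊆ E \ U → S ∪ U ⊆ E := fun S hS =>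
    union_subset (hS.trans sdiff_subset) hUE
  obtain rfl : h = fun S => g (S ∪ U) - g U := funext hh
  refine ⟨hg.contract (hUE.trans subset_union_left), fun S hS => ?_, ?_⟩
  · simp only [hext _ (hSU hS), hext _ hUE]
  · exact hCI.contract hg subset_union_right ((hSU hXE).trans subset_union_left)
      ((hSU hYE).trans subset_union_left)

/-- The common information property is preserved by contraction: if `g` is a CI extension
of `f` for the pair `(X ∪ U, Y ∪ U)`, then the contraction `h(S) = g(S ∪ U) − g(U)`
is a polymatroid extending the contraction of `f` by `U`, and it is a CI extension
for the pair `(X, Y)`. -/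
theorem stmt_5 {α : Type*} [DecidableEq α] (E Z U : Finset α)
    (hUE : U ⊆ E) (hdisj : Disjoint E Z)
    (X Y : Finset α) (hXE : X ⊆ E \ U) (hYE : Y ⊆ E \ U)
    (f g : Finset α → ℝ) (hf : IsPolymatroid E f) (hg : IsPolymatroid (E ∪ Z) g)
    (hext : ∀ S ⊆ E, g S = f S)
    (hCI : IsCIExtension Z g (X ∪ U) (Y ∪ U))
    (h : Finset α → ℝ) (hh : ∀ S, h S = g (S ∪ U) - g U) :
    IsPolymatroid ((E ∪ Z) \ U) h ∧
    (∀ S ⊆ E \ U, h S = f (S ∪ U) - f U) ∧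
    IsCIExtension Z h X Y :=
  stmt_5_general E Z U hUE X Y hXE hYE f g hg hext hCI h hh
end

section
/- Let f be a polymatroid on a finite set E containing a Vámos configuration, i.e., there are subsets L₀, L₁, L₂, L₃ ⊆ E with f(Lᵢ) = 2 for each i, f(Lᵢ ∪ Lⱼ) = 3 for every pair i < j except f(L₀ ∪ L₃) = 4, f(Lᵢ ∪ Lⱼ ∪ Lₖ) = 4 for every triple i < j < k, and f(L₀ ∪ L₁ ∪ L₂ ∪ L₃) = 4. Then for every nonempty finite set Z disjoint from E there is no polymatroid g on E ∪ Z that extends f and is an AK extension of f for the pair (L₁ ∪ L₂, L₀). -/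
open Finset

/-- The sets `L₀, L₁, L₂, L₃` form a Vámos configuration in the polymatroid `f`. -/
def IsVamosConfig {α : Type*} [DecidableEq α] (f : Finset α → ℝ)
    (L₀ L₁ L₂ L₃ : Finset α) : Prop :=
  f L₀ = 2 ∧ f L₁ = 2 ∧ f L₂ = 2 ∧ f L₃ = 2 ∧
  f (L₀ ∪ L₁) = 3 ∧ f (L₀ ∪ L₂) = 3 ∧ f (L₁ ∪ L₂) = 3 ∧
  f (L₁ ∪ L₃) = 3 ∧ f (L₂ ∪ L₃) = 3 ∧ f (L₀ ∪ L₃) = 4 ∧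
  f (L₀ ∪ L₁ ∪ L₂) = 4 ∧ f (L₀ ∪ L₁ ∪ L₃) = 4 ∧
  f (L₀ ∪ L₂ ∪ L₃) = 4 ∧ f (L₁ ∪ L₂ ∪ L₃) = 4 ∧
  f (L₀ ∪ L₁ ∪ L₂ ∪ L₃) = 4

/-!
The AK conditions force `g Z = 1` and `g (L₁ ∪ Z) = g (L₂ ∪ Z) = 2`: geometrically, `Z` is the
intersection point of the lines `L₁` and `L₂`. Submodularity then shows that every line `L`
meeting both `L₁` and `L₂` (`g (L ∪ Lᵢ) = 3`) but not coplanar with them (`g (L ∪ L₁ ∪ L₂) = 4`)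
passes through that point, `g (L ∪ Z) ≤ 2`. Both `L₀` and `L₃` are such lines, so
`g (L₀ ∪ L₃) ≤ g (L₀ ∪ Z) + g (L₃ ∪ Z) - g Z ≤ 3`, whereas the Vámos configuration has
`g (L₀ ∪ L₃) = 4`.
-/

section

variable {α : Type*} [DecidableEq α]

theorem IsPolymatroid.add_le_add_of_subset_s7 {G : Finset α} {g : Finset α → ℝ}
    (hg : IsPolymatroid G g) {X Y A B : Finset α} (hX : X ⊆ G) (hY : Y ⊆ G)
    (hA : A ⊆ X ∪ Y) (hB : B ⊆ X ∩ Y) : g A + g B ≤ g X + g Y := by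
  obtain ⟨-, hmono, hsub⟩ := hg
  have hXY : X ∪ Y ⊆ G := union_subset hX hY
  linarith [hsub hX hY, hmono hA hXY, hmono hB (inter_subset_left.trans hX)]

theorem IsPolymatroid.union_union_add_le {G : Finset α} {g : Finset α → ℝ}
    (hg : IsPolymatroid G g) {A B C : Finset α} (hA : A ⊆ G) (hB : B ⊆ G) (hC : C ⊆ G) :
    g (A ∪ B ∪ C) + g B ≤ g (A ∪ B) + g (B ∪ C) :=
  hg.add_le_add_of_subset_s7 (union_subset hA hB) (union_subset hB hC) (by grind) (by grind)

theorem IsAKExtension.apply_eq {Z X Y : Finset α} {g : Finset α → ℝ}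
    (h : IsAKExtension Z g X Y) : g Z = g X + g Y - g (X ∪ Y) := by
  have := h.2 X subset_rfl
  rw [union_comm X Z, h.1] at this
  linarith

theorem IsVamosConfig.of_eqOn {E : Finset α} {f g : Finset α → ℝ} {L₀ L₁ L₂ L₃ : Finset α}
    (hV : IsVamosConfig f L₀ L₁ L₂ L₃) (hgf : ∀ S ⊆ E, g S = f S)
    (hL₀ : L₀ ⊆ E) (hL₁ : L₁ ⊆ E) (hL₂ : L₂ ⊆ E) (hL₃ : L₃ ⊆ E) :
    IsVamosConfig g L₀ L₁ L₂ L₃ := by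
  simpa (disch := simp only [union_subset_iff, *, and_self]) only [IsVamosConfig, hgf] using hV

theorem not_isAKExtension_of_isVamosConfig {G Z L₀ L₁ L₂ L₃ : Finset α} {g : Finset α → ℝ}
    (hg : IsPolymatroid G g) (hZ : Z ⊆ G)
    (hL₀ : L₀ ⊆ G) (hL₁ : L₁ ⊆ G) (hL₂ : L₂ ⊆ G) (hL₃ : L₃ ⊆ G)
    (hV : IsVamosConfig g L₀ L₁ L₂ L₃) : ¬ IsAKExtension Z g (L₁ ∪ L₂) L₀ := by
  intro hAK
  obtain ⟨g₀, g₁, g₂, -, g₀₁, g₀₂, g₁₂, g₁₃, g₂₃, g₀₃, g₀₁₂, -, -, g₁₂₃, -⟩ := hV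
  have gZ : g Z = 1 := by
    have := hAK.apply_eq
    rw [show L₁ ∪ L₂ ∪ L₀ = L₀ ∪ L₁ ∪ L₂ by grind] at this
    linarith
  have g₁Z : g (L₁ ∪ Z) = 2 := by
    have := hAK.2 L₁ subset_union_left
    rw [union_comm L₁ L₀] at this
    linarith
  have g₂Z : g (L₂ ∪ Z) = 2 := by
    have := hAK.2 L₂ subset_union_right
    rw [union_comm L₂ L₀] at this
    linarith
  have through_Z : ∀ L ⊆ G, g (L ∪ L₁) = 3 → g (L ∪ L₂) = 3 → g (L ∪ L₁ ∪ L₂) = 4 →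
      g (L ∪ Z) ≤ 2 := by
    intro L hL h₁ h₂ h₁₂
    have := hg.union_union_add_le hL hL₁ hZ
    have := hg.union_union_add_le hL hL₂ hZ
    have := hg.add_le_add_of_subset_s7 (A := L ∪ L₁ ∪ L₂) (B := L ∪ Z)
      (union_subset (union_subset hL hL₁) hZ) (union_subset (union_subset hL hL₂) hZ)
      (by grind) (by grind)
    linarith
  have g₀Z := through_Z L₀ hL₀ g₀₁ g₀₂ g₀₁₂
  have g₃Z := through_Z L₃ hL₃ (by rwa [union_comm]) (by rwa [union_comm])
    (by rwa [show L₃ ∪ L₁ ∪ L₂ = L₁ ∪ L₂ ∪ L₃ by grind])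
  have := hg.add_le_add_of_subset_s7 (A := L₀ ∪ L₃) (B := Z) (union_subset hL₀ hZ)
    (union_subset hL₃ hZ) (by grind) (by grind)
  linarith

end

theorem stmt_7_general {α : Type*} [DecidableEq α] (E : Finset α) (f : Finset α → ℝ)
    (L₀ L₁ L₂ L₃ : Finset α)
    (hL₀ : L₀ ⊆ E) (hL₁ : L₁ ⊆ E) (hL₂ : L₂ ⊆ E) (hL₃ : L₃ ⊆ E)
    (hVamos : IsVamosConfig f L₀ L₁ L₂ L₃) :
    ∀ Z : Finset α, Z.Nonempty → Disjoint Z E →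
      ¬ ∃ g : Finset α → ℝ, IsPolymatroid (E ∪ Z) g ∧ (∀ S ⊆ E, g S = f S) ∧
        IsAKExtension Z g (L₁ ∪ L₂) L₀ := by
  rintro Z - - ⟨g, hg, hgf, hAK⟩
  have hE : E ⊆ E ∪ Z := subset_union_left
  exact not_isAKExtension_of_isVamosConfig hg subset_union_right (hL₀.trans hE) (hL₁.trans hE)
    (hL₂.trans hE) (hL₃.trans hE) (hVamos.of_eqOn hgf hL₀ hL₁ hL₂ hL₃) hAK

/-- A polymatroid containing a Vámos configuration admits no AK extension
for the pair `(L₁ ∪ L₂, L₀)`. -/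
theorem stmt_7 {α : Type*} [DecidableEq α] (E : Finset α) (f : Finset α → ℝ)
    (hf : IsPolymatroid E f)
    (L₀ L₁ L₂ L₃ : Finset α)
    (hL₀ : L₀ ⊆ E) (hL₁ : L₁ ⊆ E) (hL₂ : L₂ ⊆ E) (hL₃ : L₃ ⊆ E)
    (hVamos : IsVamosConfig f L₀ L₁ L₂ L₃) :
    ∀ Z : Finset α, Z.Nonempty → Disjoint Z E →
      ¬ ∃ g : Finset α → ℝ, IsPolymatroid (E ∪ Z) g ∧ (∀ S ⊆ E, g S = f S) ∧
        IsAKExtension Z g (L₁ ∪ L₂) L₀ :=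
  stmt_7_general E f L₀ L₁ L₂ L₃ hL₀ hL₁ hL₂ hL₃ hVamos
end

section
/- Let K be a field, V a finite-dimensional K-vector space, E a finite set, and (V_x)_{x∈E} a family of subspaces of V. For S ⊆ E let f(S) be the dimension of the subspace spanned by ⋃_{x∈S} V_x. Let X, Y ⊆ E, let z ∉ E, set V_z = (span of ⋃_{x∈X} V_x) ∩ (span of ⋃_{y∈Y} V_y), and for S ⊆ E ∪ {z} let g(S) be the dimension of the subspace spanned by ⋃_{x∈S} V_x. Then g is a polymatroid on E ∪ {z} extending f, and g is a CI extension of f for the pair (X, Y): g({z} ∪ X) = g(X), g({z} ∪ Y) = g(Y), and g(X ∪ {z}) + g(Y ∪ {z}) = g(X ∪ Y ∪ {z}) + g({z}). -/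
/-!
The dimension function `S ↦ dim (∑_{x ∈ S} V_x)` of a family of subspaces is a polymatroid:
it is monotone, and submodular because `span (S ∩ T) ≤ span S ⊓ span T` while Grassmann's formula
`dim (U ⊔ U') + dim (U ⊓ U') = dim U + dim U'` holds. Since `V_z = span X ⊓ span Y` lies in both
spans, adjoining `z` to `X`, to `Y` or to `X ∪ Y` does not change the span, and the remaining CI
identity is Grassmann's formula for `span X` and `span Y`.
-/

open Finset

section Congr

variable {α : Type*} [DecidableEq α] {f g : Finset α → ℝ}

theorem IsPolymatroid.congr {E : Finset α} (hf : IsPolymatroid E f)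
    (hfg : ∀ S ⊆ E, f S = g S) : IsPolymatroid E g := by
  obtain ⟨hempty, hmono, hsubmod⟩ := hf
  refine ⟨?_, fun S T hST hTE => ?_, fun S T hSE hTE => ?_⟩
  · rw [← hfg ∅ (empty_subset E), hempty]
  · rw [← hfg S (hST.trans hTE), ← hfg T hTE]
    exact hmono hST hTE
  · rw [← hfg S hSE, ← hfg T hTE, ← hfg _ (union_subset hSE hTE),
      ← hfg _ (inter_subset_left.trans hSE)]
    exact hsubmod hSE hTE

theorem IsCIExtension.congr {U Z X Y : Finset α} (hf : IsCIExtension Z f X Y)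
    (hZ : Z ⊆ U) (hX : X ⊆ U) (hY : Y ⊆ U) (hfg : ∀ S ⊆ U, f S = g S) :
    IsCIExtension Z g X Y := by
  obtain ⟨hZX, hZY, hmod⟩ := hf
  simp only [IsCIExtension, ← hfg _ hX, ← hfg _ hY, ← hfg _ hZ, ← hfg _ (union_subset hZ hX),
    ← hfg _ (union_subset hZ hY), ← hfg _ (union_subset hX hZ), ← hfg _ (union_subset hY hZ),
    ← hfg _ (union_subset (union_subset hX hY) hZ)]
  exact ⟨hZX, hZY, hmod⟩

end Congr

section SubspaceRank

variable {α K W : Type*} [Field K] [AddCommGroup W] [Module K W]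

noncomputable def subspaceRank (V : α → Submodule K W) (S : Finset α) : ℝ :=
  Module.finrank K ↥(⨆ x ∈ S, V x)

variable (V : α → Submodule K W)

theorem subspaceRank_empty : subspaceRank V ∅ = 0 := by
  unfold subspaceRank
  rw [show (⨆ x ∈ (∅ : Finset α), V x) = ⊥ by simp, finrank_bot, Nat.cast_zero]

variable [FiniteDimensional K W]

theorem subspaceRank_mono {S T : Finset α} (hST : S ⊆ T) :
    subspaceRank V S ≤ subspaceRank V T := by
  unfold subspaceRank
  exact_mod_cast Submodule.finrank_mono (biSup_mono fun x hx => hST hx)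

variable [DecidableEq α]

theorem subspaceRank_union_add_inter_le (S T : Finset α) :
    subspaceRank V (S ∪ T) + subspaceRank V (S ∩ T) ≤ subspaceRank V S + subspaceRank V T := by
  have hinter : (⨆ x ∈ S ∩ T, V x) ≤ (⨆ x ∈ S, V x) ⊓ ⨆ x ∈ T, V x :=
    le_inf (biSup_mono fun _ hx => (mem_inter.1 hx).1) (biSup_mono fun _ hx => (mem_inter.1 hx).2)
  have hdim := Submodule.finrank_sup_add_finrank_inf_eq (⨆ x ∈ S, V x) (⨆ x ∈ T, V x)
  have hle := Submodule.finrank_mono hinter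
  unfold subspaceRank
  rw [Finset.iSup_union]
  exact_mod_cast hdim ▸ Nat.add_le_add_left hle _

theorem isPolymatroid_subspaceRank (E : Finset α) : IsPolymatroid E (subspaceRank V) :=
  ⟨subspaceRank_empty V, fun _ _ hST _ => subspaceRank_mono V hST,
    fun S T _ _ => subspaceRank_union_add_inter_le V S T⟩

theorem isCIExtension_subspaceRank {X Y : Finset α} {z : α}
    (hz : V z = (⨆ x ∈ X, V x) ⊓ ⨆ y ∈ Y, V y) : IsCIExtension {z} (subspaceRank V) X Y := by
  have hdim := Submodule.finrank_sup_add_finrank_inf_eq (⨆ x ∈ X, V x) (⨆ y ∈ Y, V y)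
  have hXY : V z ≤ (⨆ x ∈ X, V x) ⊔ ⨆ y ∈ Y, V y := hz ▸ inf_le_left.trans le_sup_left
  have hunion : ∀ S : Finset α, (⨆ x ∈ S ∪ {z}, V x) = (⨆ x ∈ S, V x) ⊔ V z := fun S => by
    rw [Finset.iSup_union, Finset.iSup_singleton]
  unfold IsCIExtension subspaceRank
  rw [union_comm {z} X, union_comm {z} Y, hunion, hunion, hunion, Finset.iSup_singleton,
    sup_eq_left.2 (hz ▸ inf_le_left), sup_eq_left.2 (hz ▸ inf_le_right), Finset.iSup_union,
    sup_eq_left.2 hXY, hz]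
  exact ⟨rfl, rfl, by exact_mod_cast hdim.symm⟩

end SubspaceRank

theorem stmt_9_general {α : Type*} [DecidableEq α] (K W : Type*) [Field K] [AddCommGroup W]
    [Module K W] [FiniteDimensional K W]
    (E : Finset α) (Vs : α → Submodule K W)
    (X Y : Finset α) (hXE : X ⊆ E) (hYE : Y ⊆ E)
    (z : α)
    (hVz : Vs z = (⨆ x ∈ X, Vs x) ⊓ (⨆ y ∈ Y, Vs y))
    (f g : Finset α → ℝ)
    (hfdef : ∀ S : Finset α, S ⊆ E → f S = Module.finrank K ↥(⨆ x ∈ S, Vs x))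
    (hgdef : ∀ S : Finset α, S ⊆ E ∪ {z} → g S = Module.finrank K ↥(⨆ x ∈ S, Vs x)) :
    IsPolymatroid (E ∪ {z}) g ∧ (∀ S ⊆ E, g S = f S) ∧ IsCIExtension {z} g X Y := by
  have hg : ∀ S ⊆ E ∪ {z}, subspaceRank Vs S = g S := fun S hS => (hgdef S hS).symm
  refine ⟨(isPolymatroid_subspaceRank Vs _).congr hg, fun S hS => ?_,
    (isCIExtension_subspaceRank Vs hVz).congr subset_union_right
      (hXE.trans subset_union_left) (hYE.trans subset_union_left) hg⟩
  rw [hgdef S (hS.trans subset_union_left), hfdef S hS]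

/-- The class of `K`-linearly representable polymatroids satisfies the common
information property: adjoining a new element `z` representing the intersection
of the spans of `X` and of `Y` yields a linearly representable CI extension. -/
theorem stmt_9 {α : Type*} [DecidableEq α] (K W : Type*) [Field K] [AddCommGroup W]
    [Module K W] [FiniteDimensional K W]
    (E : Finset α) (Vs : α → Submodule K W)
    (X Y : Finset α) (hXE : X ⊆ E) (hYE : Y ⊆ E)
    (z : α) (hz : z ∉ E)
    (hVz : Vs z = (⨆ x ∈ X, Vs x) ⊓ (⨆ y ∈ Y, Vs y))
    (f g : Finset α → ℝ)
    (hfdef : ∀ S : Finset α, S ⊆ E → f S = Module.finrank K ↥(⨆ x ∈ S, Vs x))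
    (hgdef : ∀ S : Finset α, S ⊆ E ∪ {z} → g S = Module.finrank K ↥(⨆ x ∈ S, Vs x)) :
    IsPolymatroid (E ∪ {z}) g ∧ (∀ S ⊆ E, g S = f S) ∧ IsCIExtension {z} g X Y :=
  stmt_9_general K W E Vs X Y hXE hYE z hVz f g hfdef hgdef
end

section
/- Let K be a field, V a K-vector space, E a finite set, and v : E → V a family of vectors; for S ⊆ E let f(S) denote the dimension of the span of {v(x) : x ∈ S}. Let F₁, F₂ ⊆ E be such that f(F₁ ∩ F₂) < f(F₁) + f(F₂) − f(F₁ ∪ F₂) (a non-modular pair). Then there exists a vector w ∈ V with w ∈ span{v(x) : x ∈ F₁} ∩ span{v(x) : x ∈ F₂} and w ∉ span{v(x) : x ∈ F₁ ∩ F₂}. (Adjoining w as a new element hence yields a generalized Euclidean extension of the K-linear matroid represented by v.) -/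
open Finset Module

namespace Submodule

variable {R M : Type*} [Ring R] [StrongRankCondition R] [AddCommGroup M] [Module R M]

theorem exists_mem_notMem_of_finrank_lt {p q : Submodule R M} [Module.Finite R q]
    (h : finrank R q < finrank R p) : ∃ w ∈ p, w ∉ q :=
  SetLike.not_le_iff_exists.mp fun hle => (finrank_mono hle).not_gt h

variable {K V : Type*} [DivisionRing K] [AddCommGroup V] [Module K V]

theorem exists_mem_inf_notMem_of_finrank_add_lt {p₁ p₂ q : Submodule K V}
    [FiniteDimensional K p₁] [FiniteDimensional K p₂] [FiniteDimensional K q]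
    (h : finrank K q + finrank K ↥(p₁ ⊔ p₂) < finrank K p₁ + finrank K p₂) :
    ∃ w ∈ p₁ ⊓ p₂, w ∉ q := by
  have hmodular := finrank_sup_add_finrank_inf_eq p₁ p₂
  exact exists_mem_notMem_of_finrank_lt (by omega)

instance finiteDimensional_span_image_finset {α : Type*} (v : α → V) (S : Finset α) :
    FiniteDimensional K (span K (v '' ↑S)) :=
  FiniteDimensional.span_of_finite K (S.finite_toSet.image v)

end Submodule

theorem stmt_10_general {α : Type*} [DecidableEq α] (K V : Type*) [Field K] [AddCommGroup V]
    [Module K V]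
    (v : α → V) (F₁ F₂ : Finset α)
    (f : Finset α → ℝ)
    (hfdef : ∀ S : Finset α, f S = Module.finrank K ↥(Submodule.span K (v '' ↑S)))
    (hnonmod : f (F₁ ∩ F₂) < f F₁ + f F₂ - f (F₁ ∪ F₂)) :
    ∃ w : V, w ∈ Submodule.span K (v '' ↑F₁) ∧ w ∈ Submodule.span K (v '' ↑F₂) ∧
      w ∉ Submodule.span K (v '' ↑(F₁ ∩ F₂)) := by
  set p₁ := Submodule.span K (v '' ↑F₁)
  set p₂ := Submodule.span K (v '' ↑F₂)
  set q := Submodule.span K (v '' ↑(F₁ ∩ F₂))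
  have hspan_union : Submodule.span K (v '' ↑(F₁ ∪ F₂)) = p₁ ⊔ p₂ := by
    rw [coe_union, Set.image_union, Submodule.span_union]
  simp only [hfdef] at hnonmod
  rw [hspan_union] at hnonmod
  have hlt : finrank K q + finrank K ↥(p₁ ⊔ p₂) < finrank K p₁ + finrank K p₂ := by
    have : (finrank K q : ℝ) + finrank K ↥(p₁ ⊔ p₂) < finrank K p₁ + finrank K p₂ := by
      linarith
    exact_mod_cast this
  obtain ⟨w, ⟨hw₁, hw₂⟩, hw⟩ := Submodule.exists_mem_inf_notMem_of_finrank_add_lt hlt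
  exact ⟨w, hw₁, hw₂, hw⟩

/-- For a linearly represented matroid and a non-modular pair `(F₁, F₂)`, there is a vector
in the intersection of the spans of `F₁` and `F₂` that is not in the span of `F₁ ∩ F₂`;
adjoining it yields a generalized Euclidean extension. -/
theorem stmt_10 {α : Type*} [DecidableEq α] (K V : Type*) [Field K] [AddCommGroup V]
    [Module K V]
    (E : Finset α) (v : α → V) (F₁ F₂ : Finset α) (hF₁ : F₁ ⊆ E) (hF₂ : F₂ ⊆ E)
    (f : Finset α → ℝ)
    (hfdef : ∀ S : Finset α, f S = Module.finrank K ↥(Submodule.span K (v '' ↑S)))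
    (hnonmod : f (F₁ ∩ F₂) < f F₁ + f F₂ - f (F₁ ∪ F₂)) :
    ∃ w : V, w ∈ Submodule.span K (v '' ↑F₁) ∧ w ∈ Submodule.span K (v '' ↑F₂) ∧
      w ∉ Submodule.span K (v '' ↑(F₁ ∩ F₂)) :=
  stmt_10_general K V v F₁ F₂ f hfdef hnonmod
end
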